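/- arXiv:1810.11637 — 7 statements merged into one kernel-verified Lean document; each statement's English description precedes it below -/
import Mathlib

section
/- Let C be an exact category with exact structure D, and let M be a class of objects of C. Then the class of D-conflations X ↣ Y ↠ Z such that Hom(M, Y) → Hom(M, Z) is surjective for every M ∈ 𝓜 (i.e., every object of 𝓜 is projective relative to the conflation) forms an exact structure on C. -/
open CategoryTheory Limits ZeroObject

universe v u

variable {C : Type u} [CategoryTheory.Category.{v} C] [CategoryTheory.Preadditive C]
  [CategoryTheory.Limits.HasZeroObject C] [CategoryTheory.Limits.HasFiniteBiproducts C]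

/-- An exact structure on an additive category in the sense of Quillen–Keller:
a class of kernel-cokernel pairs (conflations) satisfying the axioms
[E0], [E1], [E2], [E2ᵒᵖ]. -/
structure ExactStructure (C : Type u) [CategoryTheory.Category.{v} C]
    [CategoryTheory.Preadditive C] [CategoryTheory.Limits.HasZeroObject C]
    [CategoryTheory.Limits.HasFiniteBiproducts C] where
  /-- the distinguished class of short exact sequences -/
  conf : ∀ ⦃X Y Z : C⦄, (X ⟶ Y) → (Y ⟶ Z) → Prop
  /-- every conflation is a kernel-cokernel pair -/
  kerCoker : ∀ {X Y Z : C} (i : X ⟶ Y) (d : Y ⟶ Z), conf i d →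
    ∃ w : i ≫ d = 0,
      Nonempty (IsLimit (KernelFork.ofι i w)) ∧
      Nonempty (IsColimit (CokernelCofork.ofπ d w))
  /-- [E0] the identity of the zero object is a deflation -/
  id_zero_deflation : ∃ (X : C) (i : X ⟶ (0 : C)), conf i (𝟙 (0 : C))
  /-- [E1] the composition of two deflations is a deflation -/
  comp_deflation : ∀ {Y Z W : C} (d : Y ⟶ Z) (e : Z ⟶ W),
    (∃ (X : C) (i : X ⟶ Y), conf i d) → (∃ (X : C) (i : X ⟶ Z), conf i e) →
    ∃ (X : C) (i : X ⟶ Y), conf i (d ≫ e)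
  /-- [E2] pullbacks of deflations along arbitrary morphisms exist and are deflations -/
  pullback_deflation : ∀ {Y Z Z' : C} (d : Y ⟶ Z) (f : Z' ⟶ Z),
    (∃ (X : C) (i : X ⟶ Y), conf i d) →
    ∃ (P : C) (p₁ : P ⟶ Y) (p₂ : P ⟶ Z') (comm : p₁ ≫ d = p₂ ≫ f),
      Nonempty (IsLimit (PullbackCone.mk p₁ p₂ comm)) ∧
      ∃ (X : C) (i : X ⟶ P), conf i p₂
  /-- [E2ᵒᵖ] pushouts of inflations along arbitrary morphisms exist and are inflations -/
  pushout_inflation : ∀ {X Y X' : C} (i : X ⟶ Y) (f : X ⟶ X'),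
    (∃ (Z : C) (d : Y ⟶ Z), conf i d) →
    ∃ (Q : C) (q₁ : Y ⟶ Q) (q₂ : X' ⟶ Q) (comm : i ≫ q₁ = f ≫ q₂),
      Nonempty (IsColimit (PushoutCocone.mk q₁ q₂ comm)) ∧
      ∃ (Z : C) (d : Q ⟶ Z), conf q₂ d

/-- `i` is an `E`-inflation. -/
def ExactStructure.Inflation (E : ExactStructure C) {X Y : C} (i : X ⟶ Y) : Prop :=
  ∃ (Z : C) (d : Y ⟶ Z), E.conf i d

/-- `d` is an `E`-deflation. -/
def ExactStructure.Deflation (E : ExactStructure C) {Y Z : C} (d : Y ⟶ Z) : Prop :=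
  ∃ (X : C) (i : X ⟶ Y), E.conf i d

/-- `X` is `D`-`E`-divisible: every `D`-inflation starting at `X` is an `E`-inflation. -/
def Divisible (D E : ExactStructure C) (X : C) : Prop :=
  ∀ {Y : C} (i : X ⟶ Y), D.Inflation i → E.Inflation i

/-- `Z` is `D`-`E`-flat: every `D`-deflation ending at `Z` is an `E`-deflation. -/
def Flat (D E : ExactStructure C) (Z : C) : Prop :=
  ∀ {Y : C} (d : Y ⟶ Z), D.Deflation d → E.Deflation d

/-- `Ext¹_D(Z, X) = 0`: every `D`-conflation `X ↣ Y ↠ Z` splits. -/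
def ExtZero (D : ExactStructure C) (Z X : C) : Prop :=
  ∀ {Y : C} (i : X ⟶ Y) (d : Y ⟶ Z), D.conf i d → ∃ r : Y ⟶ X, i ≫ r = 𝟙 X

/-- `X` is `D`-injective: every `D`-inflation starting at `X` splits. -/
def DInjective (D : ExactStructure C) (X : C) : Prop :=
  ∀ {Y Z : C} (i : X ⟶ Y) (d : Y ⟶ Z), D.conf i d → ∃ r : Y ⟶ X, i ≫ r = 𝟙 X

/-- `Z` is `D`-projective: every `D`-deflation ending at `Z` splits. -/
def DProjective (D : ExactStructure C) (Z : C) : Prop :=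
  ∀ {X Y : C} (i : X ⟶ Y) (d : Y ⟶ Z), D.conf i d → ∃ s : Z ⟶ Y, s ≫ d = 𝟙 Z

/-- `E` is the exact structure `D`-projectively generated by `M`:
its conflations are exactly the `D`-conflations with respect to which
every object of `M` is projective. -/
def ProjGenBy (D E : ExactStructure C) (M : Set C) : Prop :=
  ∀ {X Y Z : C} (i : X ⟶ Y) (d : Y ⟶ Z),
    E.conf i d ↔ (D.conf i d ∧ ∀ M' ∈ M, ∀ g : M' ⟶ Z, ∃ h : M' ⟶ Y, h ≫ d = g)

/-- `E` is the exact structure `D`-injectively generated by `M`: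
its conflations are exactly the `D`-conflations with respect to which
every object of `M` is injective. -/
def InjGenBy (D E : ExactStructure C) (M : Set C) : Prop :=
  ∀ {X Y Z : C} (i : X ⟶ Y) (d : Y ⟶ Z),
    E.conf i d ↔ (D.conf i d ∧ ∀ M' ∈ M, ∀ g : X ⟶ M', ∃ h : Y ⟶ M', i ≫ h = g)

/-- `𝓐^{⊥_D}`. -/
def rightPerp (D : ExactStructure C) (A : Set C) : Set C :=
  {X | ∀ a ∈ A, ExtZero D a X}

/-- `^{⊥_D}𝓐`. -/
def leftPerp (D : ExactStructure C) (A : Set C) : Set C :=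
  {X | ∀ a ∈ A, ExtZero D X a}

/-- `(𝓐, 𝓑)` is a `D`-cotorsion pair. -/
def CotorsionPair (D : ExactStructure C) (A B : Set C) : Prop :=
  rightPerp D A = B ∧ leftPerp D B = A

/-- `C` has enough `D`-injectives. -/
def EnoughInjectives (D : ExactStructure C) : Prop :=
  ∀ X : C, ∃ (Y Z : C) (i : X ⟶ Y) (d : Y ⟶ Z), D.conf i d ∧ DInjective D Y

/-- `C` has enough `D`-projectives. -/
def EnoughProjectives (D : ExactStructure C) : Prop :=
  ∀ Z : C, ∃ (X Y : C) (i : X ⟶ Y) (d : Y ⟶ Z), D.conf i d ∧ DProjective D Y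

/-!
A conflation `X ↣ Y ↠ Z` belongs to `π_D⁻¹(M)` exactly when `Hom(M', -)` maps its deflation onto
`Hom(M', Z)` for every `M' ∈ M`. Surjectivity of `Hom(M', -)` is stable under composition and
under pullback, which gives [E0], [E1] and [E2]. For [E2ᵒᵖ], the pushout of an inflation `i`
along `f` has the same cokernel as `i`, so the new deflation agrees with the old one up to an
isomorphism of the targets, and lifts against `M` transfer along it.
-/

section HomSurjective

variable {C : Type*} [Category C]

def HomSurjective (M : Set C) {Y Z : C} (d : Y ⟶ Z) : Prop :=
  ∀ M' ∈ M, ∀ g : M' ⟶ Z, ∃ h : M' ⟶ Y, h ≫ d = g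

lemma homSurjective_id (M : Set C) (Y : C) : HomSurjective M (𝟙 Y) :=
  fun _ _ g => ⟨g, Category.comp_id g⟩

variable {M : Set C}

lemma HomSurjective.comp {Y Z W : C} {d : Y ⟶ Z} {e : Z ⟶ W}
    (hd : HomSurjective M d) (he : HomSurjective M e) : HomSurjective M (d ≫ e) := by
  intro M' hM g
  obtain ⟨g', rfl⟩ := he M' hM g
  obtain ⟨h, rfl⟩ := hd M' hM g'
  exact ⟨h, (Category.assoc _ _ _).symm⟩

lemma HomSurjective.of_isLimit_pullbackCone {Y Z Z' P : C} {d : Y ⟶ Z} {f : Z' ⟶ Z}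
    {p₁ : P ⟶ Y} {p₂ : P ⟶ Z'} {comm : p₁ ≫ d = p₂ ≫ f}
    (hd : HomSurjective M d) (hpull : IsLimit (PullbackCone.mk p₁ p₂ comm)) :
    HomSurjective M p₂ := by
  intro M' hM g
  obtain ⟨h, hh⟩ := hd M' hM (g ≫ f)
  exact ⟨PullbackCone.IsLimit.lift hpull h g hh, PullbackCone.IsLimit.lift_snd hpull h g hh⟩

lemma HomSurjective.of_comp_eq_comp_of_isSplitEpi {Y Z Q Z' : C} {d : Y ⟶ Z} {u : Z ⟶ Z'}
    {q : Y ⟶ Q} {d' : Q ⟶ Z'} [IsSplitEpi u]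
    (hd : HomSurjective M d) (w : d ≫ u = q ≫ d') : HomSurjective M d' := by
  intro M' hM g
  obtain ⟨h, hh⟩ := hd M' hM (g ≫ section_ u)
  refine ⟨h ≫ q, ?_⟩
  rw [Category.assoc, ← w, ← Category.assoc, hh, Category.assoc, IsSplitEpi.id,
    Category.comp_id]

end HomSurjective

lemma exists_iso_cokernelCofork_of_isPushout {C : Type*} [Category C] [HasZeroMorphisms C]
    {X Y X' Q Z Z' : C} {i : X ⟶ Y} {f : X ⟶ X'} {q₁ : Y ⟶ Q} {q₂ : X' ⟶ Q}
    {comm : i ≫ q₁ = f ≫ q₂} (hpush : IsColimit (PushoutCocone.mk q₁ q₂ comm))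
    {d : Y ⟶ Z} {w : i ≫ d = 0} (hd : IsColimit (CokernelCofork.ofπ d w))
    {d' : Q ⟶ Z'} {w' : q₂ ≫ d' = 0} (hd' : IsColimit (CokernelCofork.ofπ d' w')) :
    ∃ e : Z ≅ Z', d ≫ e.hom = q₁ ≫ d' := by
  have : HasCokernel i := ⟨⟨⟨_, hd⟩⟩⟩
  have : HasCokernel q₂ := ⟨⟨⟨_, hd'⟩⟩⟩
  have sq : IsPushout i f q₁ q₂ := IsPushout.of_isColimit hpush
  have := isIso_cokernel_map_of_isPushout sq
  let e₁ := IsColimit.coconePointUniqueUpToIso hd (colimit.isColimit _)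
  let e₂ := IsColimit.coconePointUniqueUpToIso (colimit.isColimit _) hd'
  have h₁ : d ≫ e₁.hom = cokernel.π i :=
    IsColimit.comp_coconePointUniqueUpToIso_hom hd _ WalkingParallelPair.one
  have h₂ : cokernel.π q₂ ≫ e₂.hom = d' :=
    IsColimit.comp_coconePointUniqueUpToIso_hom _ hd' WalkingParallelPair.one
  exact ⟨e₁ ≪≫ asIso (cokernel.map _ _ _ _ comm) ≪≫ e₂, by simp [reassoc_of% h₁, h₂]⟩

def ExactStructure.projectivelyGenerated (D : ExactStructure C) (M : Set C) :
    ExactStructure C where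
  conf _ _ _ i d := D.conf i d ∧ HomSurjective M d
  kerCoker i d hc := D.kerCoker i d hc.1
  id_zero_deflation := by
    obtain ⟨X, i, hi⟩ := D.id_zero_deflation
    exact ⟨X, i, hi, homSurjective_id M 0⟩
  comp_deflation := by
    rintro Y Z W d e ⟨X₁, i₁, hD₁, hd⟩ ⟨X₂, i₂, hD₂, he⟩
    obtain ⟨X, i, hD⟩ := D.comp_deflation d e ⟨X₁, i₁, hD₁⟩ ⟨X₂, i₂, hD₂⟩
    exact ⟨X, i, hD, hd.comp he⟩
  pullback_deflation := by
    rintro Y Z Z' d f ⟨X, i, hD, hd⟩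
    obtain ⟨P, p₁, p₂, comm, ⟨hpull⟩, X', i', hD'⟩ := D.pullback_deflation d f ⟨X, i, hD⟩
    exact ⟨P, p₁, p₂, comm, ⟨hpull⟩, X', i', hD', hd.of_isLimit_pullbackCone hpull⟩
  pushout_inflation := by
    rintro X Y X' i f ⟨Z, d, hD, hd⟩
    obtain ⟨Q, q₁, q₂, comm, ⟨hpush⟩, Z', d', hD'⟩ := D.pushout_inflation i f ⟨Z, d, hD⟩
    obtain ⟨w, -, ⟨hcok⟩⟩ := D.kerCoker i d hD
    obtain ⟨w', -, ⟨hcok'⟩⟩ := D.kerCoker q₂ d' hD'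
    obtain ⟨e, he⟩ := exists_iso_cokernelCofork_of_isPushout hpush hcok hcok'
    exact ⟨Q, q₁, q₂, comm, ⟨hpush⟩, Z', d', hD', hd.of_comp_eq_comp_of_isSplitEpi he⟩

/-- The class of `D`-conflations with respect to which every object of `M` is
projective forms an exact structure on `C` (the `D`-projectively generated
exact structure `π_D⁻¹(M)`). -/
theorem projectively_generated_exact_structure
    (D : ExactStructure C) (M : Set C) :
    ∃ E : ExactStructure C, ProjGenBy D E M := by
  exact ⟨D.projectivelyGenerated M, fun _ _ => Iff.rfl⟩
end

section
/- Let C be an additive category with exact structures D and E such that E is D-projectively generated. Then the class Div(D-E) of D-E-divisible objects satisfies (⊥_D Div(D-E))^{⊥_D} = Div(D-E), i.e., Div(D-E) is the right half of the D-cotorsion pair it generates. -/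
open CategoryTheory Limits ZeroObject

universe v u

variable {C : Type u} [CategoryTheory.Category.{v} C] [CategoryTheory.Preadditive C]
  [CategoryTheory.Limits.HasZeroObject C] [CategoryTheory.Limits.HasFiniteBiproducts C]

/-!
Let `X` lie in `(⊥_D Div)^{⊥_D}` and let `M'` be one of the objects generating `E`. Every `D`-conflation
ending at `M'` and starting at a divisible object is an `E`-conflation, along which `M'` is projective, so
it splits: `M'` lies in `⊥_D Div`. Hence `Ext¹_D(M', X) = 0`, so the pullback of any `D`-conflation
`X ↣ Y ↠ Z` along a map `M' ⟶ Z` splits, which is exactly the lifting property making `X ↣ Y` an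
`E`-inflation. Since conflations are not assumed closed under isomorphism, the pullback (whose kernel
is only isomorphic to `X`) is moved back onto `X` by a pushout along that isomorphism.
-/

section KernelCokernel

variable {𝒜 : Type*} [Category 𝒜]

lemma exists_retraction_of_section [Preadditive 𝒜] {X Y Z : 𝒜} {i : X ⟶ Y} {d : Y ⟶ Z}
    (w : i ≫ d = 0) (hi : IsLimit (KernelFork.ofι i w)) {s : Z ⟶ Y} (hs : s ≫ d = 𝟙 Z) :
    ∃ r : Y ⟶ X, i ≫ r = 𝟙 X := by
  obtain ⟨r, hr⟩ := KernelFork.IsLimit.lift' hi (𝟙 Y - d ≫ s) (by simp [hs])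
  refine ⟨r, Fork.IsLimit.hom_ext hi ?_⟩
  simp only [Fork.ι_ofι] at hr ⊢
  simp [hr, reassoc_of% w]

lemma exists_section_of_retraction [Preadditive 𝒜] {X Y Z : 𝒜} {i : X ⟶ Y} {d : Y ⟶ Z}
    (w : i ≫ d = 0) (hd : IsColimit (CokernelCofork.ofπ d w)) {r : Y ⟶ X} (hr : i ≫ r = 𝟙 X) :
    ∃ s : Z ⟶ Y, s ≫ d = 𝟙 Z := by
  obtain ⟨s, hs⟩ := CokernelCofork.IsColimit.desc' hd (𝟙 Y - r ≫ i) (by simp [reassoc_of% hr])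
  refine ⟨s, Cofork.IsColimit.hom_ext hd ?_⟩
  simp only [Cofork.π_ofπ] at hs ⊢
  simp [reassoc_of% hs, w]

variable [HasZeroMorphisms 𝒜]

lemma exists_iso_cokernel_of_isPushout {X Y X' Q Z Z' : 𝒜} {i : X ⟶ Y} {f : X ⟶ X'}
    {q₁ : Y ⟶ Q} {q₂ : X' ⟶ Q} {comm : i ≫ q₁ = f ≫ q₂}
    (hQ : IsColimit (PushoutCocone.mk q₁ q₂ comm)) {d : Y ⟶ Z} {d' : Q ⟶ Z'}
    (w : i ≫ d = 0) (hd : IsColimit (CokernelCofork.ofπ d w))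
    (w' : q₂ ≫ d' = 0) (hd' : IsColimit (CokernelCofork.ofπ d' w')) :
    ∃ α : Z ≅ Z', d ≫ α.hom = q₁ ≫ d' := by
  obtain ⟨α, hα⟩ : { α : Z ⟶ Z' // d ≫ α = q₁ ≫ d' } :=
    CokernelCofork.IsColimit.desc' hd (q₁ ≫ d') (by simp [reassoc_of% comm, w'])
  obtain ⟨u, hu₁, hu₂⟩ : { u : Q ⟶ Z // q₁ ≫ u = d ∧ q₂ ≫ u = 0 } :=
    PushoutCocone.IsColimit.desc' hQ d 0 (by simp [w])
  obtain ⟨β, hβ⟩ : { β : Z' ⟶ Z // d' ≫ β = u } := CokernelCofork.IsColimit.desc' hd' u hu₂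
  refine ⟨⟨α, β, ?_, ?_⟩, hα⟩
  · exact Cofork.IsColimit.hom_ext hd (by simp [reassoc_of% hα, hβ, hu₁])
  · have hu : u ≫ α = d' := by
      refine PushoutCocone.IsColimit.hom_ext hQ ?_ ?_
      · change q₁ ≫ u ≫ α = q₁ ≫ d'
        rw [reassoc_of% hu₁, hα]
      · change q₂ ≫ u ≫ α = q₂ ≫ d'
        rw [reassoc_of% hu₂, w', zero_comp]
    exact Cofork.IsColimit.hom_ext hd' (by simp [reassoc_of% hβ, hu])

lemma exists_iso_kernel_of_isPullback {X X' Y P Z Z' : 𝒜} {d : Y ⟶ Z} {g : Z' ⟶ Z}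
    {p₁ : P ⟶ Y} {p₂ : P ⟶ Z'} {comm : p₁ ≫ d = p₂ ≫ g}
    (hP : IsLimit (PullbackCone.mk p₁ p₂ comm)) {i : X ⟶ Y} {i' : X' ⟶ P}
    (w : i ≫ d = 0) (hi : IsLimit (KernelFork.ofι i w))
    (w' : i' ≫ p₂ = 0) (hi' : IsLimit (KernelFork.ofι i' w')) :
    ∃ l : X' ≅ X, l.hom ≫ i = i' ≫ p₁ := by
  obtain ⟨l, hl⟩ : { l : X' ⟶ X // l ≫ i = i' ≫ p₁ } :=
    KernelFork.IsLimit.lift' hi (i' ≫ p₁) (by simp [comm, reassoc_of% w'])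
  obtain ⟨j, hj₁, hj₂⟩ : { j : X ⟶ P // j ≫ p₁ = i ∧ j ≫ p₂ = 0 } :=
    PullbackCone.IsLimit.lift' hP i 0 (by simp [w])
  obtain ⟨m, hm⟩ : { m : X ⟶ X' // m ≫ i' = j } := KernelFork.IsLimit.lift' hi' j hj₂
  refine ⟨⟨l, m, ?_, ?_⟩, hl⟩
  · have hl' : l ≫ j = i' := by
      refine PullbackCone.IsLimit.hom_ext hP ?_ ?_
      · change (l ≫ j) ≫ p₁ = i' ≫ p₁
        rw [Category.assoc, hj₁, hl]
      · change (l ≫ j) ≫ p₂ = i' ≫ p₂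
        rw [Category.assoc, hj₂, w', comp_zero]
    exact Fork.IsLimit.hom_ext hi' (by simp [hm, hl'])
  · exact Fork.IsLimit.hom_ext hi (by simp [hl, reassoc_of% hm, hj₁])

end KernelCokernel

section Perp

variable {D E : ExactStructure C}

lemma subset_rightPerp_leftPerp (A : Set C) : A ⊆ rightPerp D (leftPerp D A) :=
  fun _ hX _ ha => ha _ hX

lemma mem_leftPerp_divisible_of_iso {M : Set C} (hE : ProjGenBy D E M) {M' T : C} (hM' : M' ∈ M)
    (e : M' ≅ T) : T ∈ leftPerp D {X | Divisible D E X} := by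
  intro A hA W ι δ hιδ
  obtain ⟨T', δ', hιδ'⟩ := hA ι ⟨T, δ, hιδ⟩
  obtain ⟨hD, hlift⟩ := (hE ι δ').mp hιδ'
  obtain ⟨w, ⟨hι⟩, ⟨hδ⟩⟩ := D.kerCoker ι δ hιδ
  obtain ⟨w', -, ⟨hδ'⟩⟩ := D.kerCoker ι δ' hD
  let c := hδ.coconePointUniqueUpToIso hδ'
  have hc : δ ≫ c.hom = δ' := hδ.comp_coconePointUniqueUpToIso_hom hδ' WalkingParallelPair.one
  obtain ⟨h, hh⟩ := hlift M' hM' (e.hom ≫ c.hom)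
  have hhδ : h ≫ δ = e.hom := by rw [← cancel_mono c.hom, Category.assoc, hc, hh]
  exact exists_retraction_of_section w hι (s := e.inv ≫ h) (by simp [hhδ])

lemma exists_retraction_of_iso_of_extZero {X X' P Z : C} {i : X' ⟶ P} {p : P ⟶ Z}
    (hip : D.conf i p) (l : X' ≅ X) (hZ : ∀ Z', (Z ≅ Z') → ExtZero D Z' X) :
    ∃ r : P ⟶ X', i ≫ r = 𝟙 X' := by
  obtain ⟨Q, q₁, q₂, comm, ⟨hQ⟩, Z', d, hq⟩ := D.pushout_inflation i l.hom ⟨Z, p, hip⟩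
  obtain ⟨w, -, ⟨hp⟩⟩ := D.kerCoker i p hip
  obtain ⟨w', -, ⟨hd⟩⟩ := D.kerCoker q₂ d hq
  obtain ⟨α, -⟩ := exists_iso_cokernel_of_isPushout hQ w hp w' hd
  obtain ⟨r, hr⟩ := hZ Z' α q₂ d hq
  exact ⟨q₁ ≫ r ≫ l.inv, by rw [reassoc_of% comm, reassoc_of% hr, l.hom_inv_id]⟩

lemma divisible_of_mem_rightPerp_leftPerp {M : Set C} (hE : ProjGenBy D E M) {X : C}
    (hX : X ∈ rightPerp D (leftPerp D {X | Divisible D E X})) : Divisible D E X := by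
  rintro Y i ⟨Z, d, hid⟩
  refine ⟨Z, d, (hE i d).mpr ⟨hid, fun M' hM' g => ?_⟩⟩
  obtain ⟨P, p₁, p₂, comm, ⟨hP⟩, X', i', hip⟩ := D.pullback_deflation d g ⟨X, i, hid⟩
  obtain ⟨w, ⟨hi⟩, -⟩ := D.kerCoker i d hid
  obtain ⟨w', ⟨hi'⟩, ⟨hp⟩⟩ := D.kerCoker i' p₂ hip
  obtain ⟨l, -⟩ := exists_iso_kernel_of_isPullback hP w hi w' hi'
  obtain ⟨r, hr⟩ := exists_retraction_of_iso_of_extZero hip l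
    fun Z' e => hX Z' (mem_leftPerp_divisible_of_iso hE hM' e)
  obtain ⟨s, hs⟩ := exists_section_of_retraction w' hp hr
  exact ⟨s ≫ p₁, by rw [Category.assoc, comm, reassoc_of% hs]⟩

end Perp

/-- If `E` is `D`-projectively generated, then
`(⊥_D Div(D-E))^{⊥_D} = Div(D-E)`. -/
theorem rightPerp_leftPerp_divisible
    (D E : ExactStructure C) (hE : ∃ M : Set C, ProjGenBy D E M) :
    rightPerp D (leftPerp D {X : C | Divisible D E X}) = {X : C | Divisible D E X} := by
  obtain ⟨M, hM⟩ := hE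
  exact Set.Subset.antisymm (fun _ hX => divisible_of_mem_rightPerp_leftPerp hM hX)
    (subset_rightPerp_leftPerp _)
end

section
/- Let C be an additive category with exact structures D and E such that E is D-injectively generated. Then the class Flat(D-E) of D-E-flat objects satisfies ⊥_D(Flat(D-E)^{⊥_D}) = Flat(D-E). -/
open CategoryTheory Limits ZeroObject

universe v u

variable {C : Type u} [CategoryTheory.Category.{v} C] [CategoryTheory.Preadditive C]
  [CategoryTheory.Limits.HasZeroObject C] [CategoryTheory.Limits.HasFiniteBiproducts C]

/-!
Every object `K` of the generating class `M` is injective with respect to `E`-inflations, and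
this alone puts `K` in `Flat(D-E)^{⊥_D}`: a `D`-conflation `K ↣ W ↠ F` with `F` flat is an
`E`-conflation, so the identity of `K` extends along it. Now let `Z ∈ ⊥_D(Flat(D-E)^{⊥_D})`,
let `X ↣ Y ↠ Z` be a `D`-conflation and `g : X ⟶ K` with `K ∈ M`. Pushing the conflation out
along `g` gives a `D`-conflation `K ↣ Q ↠ Z`, which splits; its retraction restricted to `Y`
extends `g`. Hence every `D`-deflation onto `Z` is an `E`-deflation.

The axioms determine the ends of a conflation only up to isomorphism, so the pushout
conflation ends at an object isomorphic to `Z` and has to be transported back to `Z`.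
-/

namespace CategoryTheory

noncomputable def IsPushout.isColimitCokernelCoforkDesc {𝒜 : Type*} [Category 𝒜]
    [HasZeroMorphisms 𝒜] {X₁ X₂ X₃ X₄ : 𝒜} {t : X₁ ⟶ X₂} {l : X₁ ⟶ X₃} {r : X₂ ⟶ X₄}
    {b : X₃ ⟶ X₄} (sq : IsPushout t l r b) {c : CokernelCofork t} (hc : IsColimit c) :
    IsColimit (CokernelCofork.ofπ (f := b) (sq.desc c.π 0 (by simp)) (sq.inr_desc _ _ _)) :=
  CokernelCofork.IsColimit.ofπ _ _
    (fun v hv => hc.desc (CokernelCofork.ofπ (r ≫ v) (by rw [← Category.assoc, sq.w,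
      Category.assoc, hv, comp_zero])))
    (fun v hv => sq.hom_ext (by simp) (by simp [hv]))
    (fun v hv m hm => Cofork.IsColimit.hom_ext hc (by simp [← hm]))

end CategoryTheory

namespace ExactStructure

variable (E : ExactStructure C)

def ExtendsAlongInflations (K : C) : Prop :=
  ∀ ⦃A B W : C⦄ (i : A ⟶ B) (d : B ⟶ W), E.conf i d → ∀ g : A ⟶ K, ∃ h : B ⟶ K, i ≫ h = g

variable {E}

lemma ExtendsAlongInflations.of_iso {K K' : C} (hK : E.ExtendsAlongInflations K) (α : K' ≅ K) :
    E.ExtendsAlongInflations K' := by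
  intro A B W i d hid g
  obtain ⟨h, hh⟩ := hK i d hid (g ≫ α.hom)
  exact ⟨h ≫ α.inv, by rw [reassoc_of% hh, α.hom_inv_id, Category.comp_id]⟩

lemma exists_conf_of_iso {X Y Z' Z : C} {i : X ⟶ Y} {d : Y ⟶ Z'} (h : E.conf i d)
    (φ : Z' ≅ Z) :
    ∃ (X' Y' : C) (i' : X' ⟶ Y') (d' : Y' ⟶ Z) (α : X' ≅ X) (β : Y' ≅ Y),
      E.conf i' d' ∧ i' ≫ β.hom = α.hom ≫ i := by
  obtain ⟨P, p₁, p₂, comm, ⟨hpb⟩, X', i', hconf⟩ := E.pullback_deflation d φ.inv ⟨X, i, h⟩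
  have : IsIso p₁ := (IsPullback.of_isLimit hpb).isIso_fst_of_isIso
  obtain ⟨_, ⟨hker⟩, -⟩ := E.kerCoker i d h
  obtain ⟨_, ⟨hker'⟩, -⟩ := E.kerCoker i' p₂ hconf
  have hkerd := KernelFork.isLimitOfIsLimitOfIff hker' d (asIso p₁) fun _ ψ => by
    rw [asIso_hom, comm, ← Category.assoc]
    exact (Preadditive.IsIso.comp_right_eq_zero _ _).symm
  refine ⟨X', P, i', p₂, IsLimit.conePointUniqueUpToIso hkerd hker, asIso p₁, hconf, ?_⟩
  simpa using (IsLimit.conePointUniqueUpToIso_hom_comp hkerd hker WalkingParallelPair.zero).symm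

lemma exists_conf_of_pushout {X Y Z K : C} {i : X ⟶ Y} {d : Y ⟶ Z} (h : E.conf i d)
    (g : X ⟶ K) :
    ∃ (K' Q : C) (j : K' ⟶ Q) (e : Q ⟶ Z) (α : K' ≅ K) (q : Y ⟶ Q),
      E.conf j e ∧ i ≫ q = g ≫ α.inv ≫ j := by
  obtain ⟨Q, q₁, q₂, comm, ⟨hpo⟩, Z', d', hconf⟩ := E.pushout_inflation i g ⟨Z, d, h⟩
  obtain ⟨_, -, ⟨hcoker⟩⟩ := E.kerCoker i d h
  obtain ⟨_, -, ⟨hcoker'⟩⟩ := E.kerCoker q₂ d' hconf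
  let φ := IsColimit.coconePointUniqueUpToIso hcoker'
    ((IsPushout.of_isColimit hpo).isColimitCokernelCoforkDesc hcoker)
  obtain ⟨K', Q', j, e, α, β, hje, hcomm⟩ := exists_conf_of_iso hconf φ
  refine ⟨K', Q', j, e, α, q₁ ≫ β.inv, hje, ?_⟩
  rw [reassoc_of% comm, (Iso.eq_comp_inv β).mpr hcomm]
  simp

lemma ExtendsAlongInflations.mem_rightPerp_flat {D : ExactStructure C} {K : C}
    (hK : E.ExtendsAlongInflations K) : K ∈ rightPerp D {Z : C | Flat D E Z} := by
  intro F hF W j e hje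
  obtain ⟨K', i', hi'e⟩ := hF e ⟨K, j, hje⟩
  obtain ⟨_, ⟨hker⟩, -⟩ := D.kerCoker j e hje
  obtain ⟨_, ⟨hker'⟩, -⟩ := E.kerCoker i' e hi'e
  let ψ := IsLimit.conePointUniqueUpToIso hker hker'
  have hψ : ψ.hom ≫ i' = j := IsLimit.conePointUniqueUpToIso_hom_comp hker hker' .zero
  obtain ⟨h, hh⟩ := hK i' e hi'e ψ.inv
  exact ⟨h, by rw [← hψ, Category.assoc, hh]; exact ψ.hom_inv_id⟩

end ExactStructure

lemma InjGenBy.extendsAlongInflations {D E : ExactStructure C} {M : Set C}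
    (hM : InjGenBy D E M) {K : C} (hK : K ∈ M) : E.ExtendsAlongInflations K :=
  fun _ _ _ i d hid => ((hM i d).mp hid).2 K hK

/-- If `E` is `D`-injectively generated, then
`⊥_D(Flat(D-E)^{⊥_D}) = Flat(D-E)`. -/
theorem leftPerp_rightPerp_flat
    (D E : ExactStructure C) (hE : ∃ M : Set C, InjGenBy D E M) :
    leftPerp D (rightPerp D {Z : C | Flat D E Z}) = {Z : C | Flat D E Z} := by
  obtain ⟨M, hM⟩ := hE
  refine Set.Subset.antisymm ?_ fun Z hZ K hK => hK Z hZ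
  rintro Z hZ Y d ⟨X, i, hid⟩
  refine ⟨X, i, (hM i d).mpr ⟨hid, fun K hK g => ?_⟩⟩
  obtain ⟨K', Q, j, e, α, q, hje, hq⟩ := D.exists_conf_of_pushout hid g
  have hK' : K' ∈ rightPerp D {Z : C | Flat D E Z} :=
    ((hM.extendsAlongInflations hK).of_iso α).mem_rightPerp_flat
  obtain ⟨r, hr⟩ := hZ K' hK' j e hje
  exact ⟨q ≫ r ≫ α.hom, by rw [reassoc_of% hq, reassoc_of% hr, α.inv_hom_id, Category.comp_id]⟩
end

section
/- Let C be an additive category with exact structures D and E, where E is D-projectively generated by a class 𝓜. Then every object of C is D-E-divisible if and only if every object of 𝓜 is D-projective. -/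
open CategoryTheory Limits ZeroObject

universe v u

variable {C : Type u} [CategoryTheory.Category.{v} C] [CategoryTheory.Preadditive C]
  [CategoryTheory.Limits.HasZeroObject C] [CategoryTheory.Limits.HasFiniteBiproducts C]

/-- If `E` is `D`-projectively generated by `M`, then every object is
`D`-`E`-divisible iff every object of `M` is `D`-projective. -/
theorem all_divisible_iff_gen_projective
    (D E : ExactStructure C) (M : Set C) (hE : ProjGenBy D E M) :
    (∀ X : C, Divisible D E X) ↔ (∀ M' ∈ M, DProjective D M') := by
  constructor
  · intro hdiv M' hM' X Y i d hconf
    obtain ⟨Z', d', hE'⟩ := hdiv X i ⟨M', d, hconf⟩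
    obtain ⟨hD', hlift⟩ := (hE i d').mp hE'
    obtain ⟨w, _, ⟨hc⟩⟩ := D.kerCoker i d hconf
    obtain ⟨w', _, ⟨hc'⟩⟩ := D.kerCoker i d' hD'
    obtain ⟨u, hdu⟩ := CokernelCofork.IsColimit.desc' hc d' w'
    obtain ⟨v, hdv⟩ := CokernelCofork.IsColimit.desc' hc' d w
    have hdu2 : d ≫ u = d' := by simpa using hdu
    have hdv2 : d' ≫ v = d := by simpa using hdv
    have huv : u ≫ v = 𝟙 M' := by
      apply Cofork.IsColimit.hom_ext hc
      simpa using by rw [← Category.assoc]; simpa [hdu2] using hdv2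
    obtain ⟨h, hh⟩ := hlift M' hM' u
    refine ⟨h, ?_⟩
    have key : h ≫ d ≫ u = u := by rw [hdu2, hh]
    calc h ≫ d = (h ≫ d) ≫ u ≫ v := by rw [huv, Category.comp_id]
      _ = (h ≫ d ≫ u) ≫ v := by simp only [Category.assoc]
      _ = u ≫ v := by rw [← Category.assoc] at key ⊢; rw [key]
      _ = 𝟙 M' := huv
  · intro hproj X Y i hinfl
    obtain ⟨Z, d, hconf⟩ := hinfl
    refine ⟨Z, d, (hE i d).mpr ⟨hconf, ?_⟩⟩
    intro M' hM' g
    obtain ⟨P, p₁, p₂, comm, ⟨hpb⟩, X', i', hconfp⟩ := D.pullback_deflation d g ⟨X, i, hconf⟩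
    obtain ⟨s, hs⟩ := hproj M' hM' i' p₂ hconfp
    exact ⟨s ≫ p₁, by rw [Category.assoc, comm, ← Category.assoc, hs, Category.id_comp]⟩
end

section
/- Let C be an additive category with exact structures D and E, where E is D-injectively generated by a class 𝓜, and assume C has enough D-injectives. Then an object X is D-E-divisible if and only if for every M ∈ 𝓜, every morphism X → M factors through a D-injective object. -/
open CategoryTheory Limits ZeroObject

universe v u

variable {C : Type u} [CategoryTheory.Category.{v} C] [CategoryTheory.Preadditive C]
  [CategoryTheory.Limits.HasZeroObject C] [CategoryTheory.Limits.HasFiniteBiproducts C]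

/-- If `E` is `D`-injectively generated by `M` and `C` has enough
`D`-injectives, then `X` is `D`-`E`-divisible iff every morphism `X ⟶ M'` with
`M' ∈ M` factors through a `D`-injective object. -/
theorem divisible_iff_factors_through_injective
    (D E : ExactStructure C) (M : Set C) (hE : InjGenBy D E M)
    (henough : EnoughInjectives D) (X : C) :
    Divisible D E X ↔ ∀ M' ∈ M, ∀ f : X ⟶ M',
      ∃ (I : C) (g : X ⟶ I) (h : I ⟶ M'), DInjective D I ∧ g ≫ h = f := by
  constructor
  · intro hdiv M' hM' f
    obtain ⟨I, Z, i, d, hconf, hinj⟩ := henough X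
    obtain ⟨Z', d', hE'⟩ := hdiv i ⟨Z, d, hconf⟩
    obtain ⟨_, hlift⟩ := (hE _ _).mp hE'
    obtain ⟨h, hh⟩ := hlift M' hM' f
    exact ⟨I, i, h, hinj, hh⟩
  · intro hfac Y i ⟨Z, d, hconf⟩
    refine ⟨Z, d, (hE i d).mpr ⟨hconf, ?_⟩⟩
    intro M' hM' g
    obtain ⟨I, a, b, hinj, hab⟩ := hfac M' hM' g
    obtain ⟨Q, q₁, q₂, comm, _, Z', d', hconf'⟩ :=
      D.pushout_inflation i a ⟨Z, d, hconf⟩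
    obtain ⟨r, hr⟩ := hinj q₂ d' hconf'
    refine ⟨q₁ ≫ r ≫ b, ?_⟩
    rw [← Category.assoc, ← Category.assoc, comm, Category.assoc,
      Category.assoc, ← Category.assoc q₂, hr, Category.id_comp, hab]
end

section
/- Let C be an exact category (with exact structure D). In a commutative diagram whose rows are D-conflations X ↣ Y ↠ Z and X' ↣ Y' ↠ Z with vertical morphisms f : X → X', g : Y → Y' and identity on Z, the square X Y Y' X' is both a pushout and a pullback. -/
open CategoryTheory Limits ZeroObject

universe v u

variable {C : Type u} [CategoryTheory.Category.{v} C] [CategoryTheory.Preadditive C]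
  [CategoryTheory.Limits.HasZeroObject C] [CategoryTheory.Limits.HasFiniteBiproducts C]

/-! The pullback half is a diagram chase: `i` is a kernel of `d = g ≫ d'`, and `i'` is a
monomorphism killed by `d'`. For the pushout half it suffices that `[g, i'] : Y ⊞ X' ⟶ Y'` is a
cokernel of `(i, -f) : X ⟶ Y ⊞ X'`. The same chase shows that `(i, -f)` is a kernel of
`[g, i']`, and `[g, i']` is a cokernel of *some* morphism because `Y ⊞ X'`, with `fst` and
`[g, i']`, is a pullback of the deflation `d` along `d'`, hence by [E2] isomorphic to one whose
second projection is a deflation. A morphism that is the cokernel of something is the cokernel of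
its kernel. -/

section

variable {𝒞 : Type*} [Category 𝒞]

section HasZeroMorphisms

variable [HasZeroMorphisms 𝒞]

theorem KernelFork.IsLimit.exists_lift {X Y Z W : 𝒞} {i : X ⟶ Y} {d : Y ⟶ Z} {w : i ≫ d = 0}
    (hi : IsLimit (KernelFork.ofι i w)) (l : W ⟶ Y) (hl : l ≫ d = 0) : ∃ t : W ⟶ X, t ≫ i = l :=
  ⟨_, (KernelFork.IsLimit.lift' hi l hl).2⟩

theorem isPullback_of_isLimit_kernelFork {X Y X' Y' Z : 𝒞} {i : X ⟶ Y} {f : X ⟶ X'}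
    {g : Y ⟶ Y'} {i' : X' ⟶ Y'} {d' : Y' ⟶ Z} (sq : CommSq i f g i') (w : i ≫ g ≫ d' = 0)
    (hi : IsLimit (KernelFork.ofι i w)) [Mono i'] (w' : i' ≫ d' = 0) :
    IsPullback i f g i' := by
  have : Mono i := mono_of_isLimit_fork hi
  have lift (s : PullbackCone g i') : ∃ t : s.pt ⟶ X, t ≫ i = s.fst ∧ t ≫ f = s.snd := by
    obtain ⟨t, ht⟩ := KernelFork.IsLimit.exists_lift hi s.fst <| by
      rw [reassoc_of% s.condition, w', comp_zero]
    refine ⟨t, ht, ?_⟩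
    rw [← cancel_mono i', Category.assoc, ← sq.w, reassoc_of% ht, s.condition]
  choose lift lift_fst lift_snd using lift
  exact IsPullback.of_isLimit' sq <| PullbackCone.IsLimit.mk sq.w lift lift_fst lift_snd
    fun s m hm _ => by rw [← cancel_mono i, hm, lift_fst]

def isColimitCokernelCoforkOfNormalEpi {K P Q : 𝒞} {ι : K ⟶ P} {π : P ⟶ Q} [hπ : NormalEpi π]
    (w : ι ≫ π = 0) (hι : IsLimit (KernelFork.ofι ι w)) : IsColimit (CokernelCofork.ofπ π w) :=
  have : Epi π := (NormalEpi.regularEpi π).epi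
  CokernelCofork.IsColimit.ofπ' π w fun h hh =>
    NormalEpi.desc' π h <| by
      obtain ⟨t, ht⟩ := KernelFork.IsLimit.exists_lift hι hπ.g hπ.w
      rw [← ht, Category.assoc, hh, comp_zero]

end HasZeroMorphisms

section Preadditive

variable [Preadditive 𝒞]

theorem isPullback_biprod_fst_desc {X' Y Y' Z : 𝒞} [HasBinaryBiproduct Y X'] {i' : X' ⟶ Y'}
    {d' : Y' ⟶ Z} {w' : i' ≫ d' = 0} (hi' : IsLimit (KernelFork.ofι i' w')) (g : Y ⟶ Y') :
    IsPullback (biprod.fst : Y ⊞ X' ⟶ Y) (biprod.desc g i') (g ≫ d') d' := by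
  have : Mono i' := mono_of_isLimit_fork hi'
  have sq : CommSq (biprod.fst : Y ⊞ X' ⟶ Y) (biprod.desc g i') (g ≫ d') d' :=
    ⟨by ext <;> simp [w']⟩
  have lift (s : PullbackCone (g ≫ d') d') : ∃ t : s.pt ⟶ X', t ≫ i' = s.snd - s.fst ≫ g :=
    KernelFork.IsLimit.exists_lift hi' _ <| by
      rw [Preadditive.sub_comp, Category.assoc, ← s.condition, sub_self]
  choose lift hlift using lift
  refine IsPullback.of_isLimit' sq <|
    PullbackCone.IsLimit.mk sq.w (fun s => biprod.lift s.fst (lift s)) (fun s => by simp)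
      (fun s => by simp [hlift]) fun s m hm₁ hm₂ => ?_
  ext
  · simpa using hm₁
  · rw [← cancel_mono i', biprod.lift_snd, hlift, ← hm₁, ← hm₂, biprod.desc_eq]
    simp

noncomputable def isLimitKernelForkBiprodLiftNeg {X Y X' Y' Z : 𝒞} [HasBinaryBiproduct Y X']
    {i : X ⟶ Y} {f : X ⟶ X'} {g : Y ⟶ Y'} {i' : X' ⟶ Y'} {d' : Y' ⟶ Z} (sq : CommSq i f g i')
    (w : i ≫ g ≫ d' = 0) (hi : IsLimit (KernelFork.ofι i w)) [Mono i'] (w' : i' ≫ d' = 0) :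
    IsLimit (KernelFork.ofι (biprod.lift i (-f)) (by simp [sq.w]) :
      KernelFork (biprod.desc g i')) :=
  have : Mono i := mono_of_isLimit_fork hi
  have fst_comp {W : 𝒞} {k : W ⟶ Y ⊞ X'} (hk : k ≫ biprod.desc g i' = 0) :
      (k ≫ biprod.fst) ≫ g = -((k ≫ biprod.snd) ≫ i') := by
    rw [eq_neg_iff_add_eq_zero, ← hk, biprod.desc_eq]
    simp
  let lift {W : 𝒞} (k : W ⟶ Y ⊞ X') (hk : k ≫ biprod.desc g i' = 0) :
      {t : W ⟶ X // t ≫ i = k ≫ biprod.fst} :=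
    KernelFork.IsLimit.lift' hi (k ≫ biprod.fst) (by rw [← Category.assoc, fst_comp hk]; simp [w'])
  KernelFork.IsLimit.ofι _ _ (fun k hk => (lift k hk).1)
    (fun k hk => by
      ext
      · simpa using (lift k hk).2
      · rw [← cancel_mono i']
        simp only [Category.assoc, biprod.lift_snd, Preadditive.comp_neg, Preadditive.neg_comp,
          ← sq.w]
        rw [← Category.assoc, (lift k hk).2, fst_comp hk, neg_neg, Category.assoc])
    (fun k hk m hm => by
      rw [← cancel_mono i, (lift k hk).2, ← hm]
      simp)

end Preadditive

end

theorem ExactStructure.nonempty_normalEpi_of_conf (E : ExactStructure C) {X Y Z : C}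
    {i : X ⟶ Y} {d : Y ⟶ Z} (h : E.conf i d) : Nonempty (NormalEpi d) := by
  obtain ⟨w, -, ⟨hd⟩⟩ := E.kerCoker i d h
  exact ⟨⟨X, i, w, hd⟩⟩

/-- The axioms do not make deflations closed under isomorphism, so only the weaker property of
being a cokernel passes to an arbitrary pullback. -/
theorem ExactStructure.Deflation.nonempty_normalEpi_of_isPullback {E : ExactStructure C}
    {Y Z : C} {d : Y ⟶ Z} (hd : E.Deflation d) {P Z' : C} {p₁ : P ⟶ Y} {p₂ : P ⟶ Z'}
    {f : Z' ⟶ Z} (h : IsPullback p₁ p₂ d f) : Nonempty (NormalEpi p₂) := by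
  obtain ⟨Q, q₁, q₂, comm, ⟨hQ⟩, X, k, hk⟩ := E.pullback_deflation d f hd
  obtain ⟨hq₂⟩ := E.nonempty_normalEpi_of_conf hk
  let e := (IsPullback.of_isLimit' ⟨comm⟩ hQ).isoIsPullback _ _ h
  exact ⟨hq₂.ofArrowIso (Arrow.isoMk e (Iso.refl _))⟩

/-- In a commutative diagram whose rows are `D`-conflations with identity on
the cokernel side, the left square is both a pushout and a pullback. -/
theorem conflation_square_pushout_pullback
    (D : ExactStructure C) {X Y Z X' Y' : C}
    (i : X ⟶ Y) (d : Y ⟶ Z) (i' : X' ⟶ Y') (d' : Y' ⟶ Z)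
    (f : X ⟶ X') (g : Y ⟶ Y')
    (h1 : D.conf i d) (h2 : D.conf i' d')
    (c1 : i ≫ g = f ≫ i') (c2 : g ≫ d' = d) :
    Nonempty (IsColimit (PushoutCocone.mk g i' c1)) ∧
    Nonempty (IsLimit (PullbackCone.mk i f c1)) := by
  subst c2
  obtain ⟨w, ⟨hi⟩, -⟩ := D.kerCoker i (g ≫ d') h1
  obtain ⟨w', ⟨hi'⟩, -⟩ := D.kerCoker i' d' h2
  have : Mono i' := mono_of_isLimit_fork hi'
  have : HasBinaryBiproducts C := hasBinaryBiproducts_of_finite_biproducts C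
  have sq : CommSq i f g i' := ⟨c1⟩
  have hd : D.Deflation (g ≫ d') := ⟨X, i, h1⟩
  obtain ⟨_⟩ := hd.nonempty_normalEpi_of_isPullback (isPullback_biprod_fst_desc hi' g)
  exact ⟨⟨sq.isColimitEquivIsColimitCokernelCofork.symm <|
      isColimitCokernelCoforkOfNormalEpi _ (isLimitKernelForkBiprodLiftNeg sq w hi w')⟩,
    ⟨(isPullback_of_isLimit_kernelFork sq w hi w').isLimit⟩⟩
end

section
/- Let C be an additive category with an exact structure D, assume C has enough D-injectives and enough D-projectives, and let E be an exact structure D-projectively generated by a class 𝓜. Then the class of D-E-divisible objects is closed under D-deflations (i.e., for every D-conflation X ↣ Y ↠ Z with Y D-E-divisible, Z is D-E-divisible) if and only if for every D-conflation Z ↣ U ↠ V with V ∈ 𝓜 and U D-projective, Z is D-projective. -/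
open CategoryTheory Limits ZeroObject

universe v u

variable {C : Type u} [CategoryTheory.Category.{v} C] [CategoryTheory.Preadditive C]
  [CategoryTheory.Limits.HasZeroObject C] [CategoryTheory.Limits.HasFiniteBiproducts C]

/-! The two directions are dual dimension shifts. A divisible object `Y` has `Ext¹_D(V, Y) = 0`
for `V ∈ M`: pushing a conflation `K ↣ P ↠ V` out along `K ⟶ Y` gives a `D`-conflation
starting at `Y`, which is an `E`-conflation, so split by the projectivity of `V`. Hence maps
into `Y` extend along `K ↣ P`.

If divisibles are closed under deflations and `Z ↣ U ↠ V` is as stated, embed any `A` into a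
`D`-injective `A ↣ I ↠ W`. Injectives are divisible, hence so is `W`; every map `Z ⟶ W`
extends to `U` and then lifts to `I`, which forces `Ext¹_D(Z, A) = 0`.

Conversely, to see that `Z` is divisible when `X ↣ Y ↠ Z` with `Y` divisible, cover each
`V ∈ M` by `K ↣ P ↠ V` with `P` projective; `K` is projective by assumption, so every map
`K ⟶ Z` lifts to `Y`, extends to `P`, and this makes `V` projective relative to every
`D`-conflation starting at `Z`. -/

namespace ExactStructure

variable {D : ExactStructure C} {X Y Z : C} {i : X ⟶ Y} {d : Y ⟶ Z}

lemma conf.comp_eq_zero (h : D.conf i d) : i ≫ d = 0 :=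
  (D.kerCoker i d h).choose

lemma conf.exists_lift (h : D.conf i d) {W : C} (g : W ⟶ Y) (hg : g ≫ d = 0) :
    ∃ l : W ⟶ X, l ≫ i = g := by
  obtain ⟨_, ⟨hk⟩, -⟩ := D.kerCoker i d h
  obtain ⟨l, hl⟩ := KernelFork.IsLimit.lift' hk g hg
  exact ⟨l, hl⟩

lemma conf.exists_desc (h : D.conf i d) {W : C} (g : Y ⟶ W) (hg : i ≫ g = 0) :
    ∃ l : Z ⟶ W, d ≫ l = g := by
  obtain ⟨_, -, ⟨hc⟩⟩ := D.kerCoker i d h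
  obtain ⟨l, hl⟩ := CokernelCofork.IsColimit.desc' hc g hg
  exact ⟨l, hl⟩

lemma conf.cancel_mono (h : D.conf i d) {W : C} {u v : W ⟶ X} (e : u ≫ i = v ≫ i) :
    u = v := by
  obtain ⟨_, ⟨hk⟩, -⟩ := D.kerCoker i d h
  exact Fork.IsLimit.hom_ext hk e

lemma conf.cancel_epi (h : D.conf i d) {W : C} {u v : Z ⟶ W} (e : d ≫ u = d ≫ v) :
    u = v := by
  obtain ⟨_, -, ⟨hc⟩⟩ := D.kerCoker i d h
  exact Cofork.IsColimit.hom_ext hc e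

lemma conf.exists_section_of_retraction (h : D.conf i d) {r : Y ⟶ X} (hr : i ≫ r = 𝟙 X) :
    ∃ s : Z ⟶ Y, s ≫ d = 𝟙 Z := by
  obtain ⟨s, hs⟩ := h.exists_desc (𝟙 Y - r ≫ i) (by simp [reassoc_of% hr])
  refine ⟨s, h.cancel_epi ?_⟩
  simp [reassoc_of% hs, h.comp_eq_zero]

lemma conf.exists_retraction_of_endo (h : D.conf i d) {e : Y ⟶ Y} (hie : i ≫ e = 0)
    (hed : e ≫ d = d) : ∃ r : Y ⟶ X, i ≫ r = 𝟙 X := by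
  obtain ⟨r, hr⟩ := h.exists_lift (𝟙 Y - e) (by simp [hed])
  exact ⟨r, h.cancel_mono (by simp [hr, hie])⟩

end ExactStructure

variable {D E : ExactStructure C} {M : Set C}

lemma DProjective.exists_lift {P : C} (hP : DProjective D P) {Y Z : C} {d : Y ⟶ Z}
    (hd : D.Deflation d) (f : P ⟶ Z) : ∃ g : P ⟶ Y, g ≫ d = f := by
  obtain ⟨Q, p₁, p₂, comm, -, X', i', hconf⟩ := D.pullback_deflation d f hd
  obtain ⟨s, hs⟩ := hP i' p₂ hconf
  exact ⟨s ≫ p₁, by rw [Category.assoc, comm, reassoc_of% hs]⟩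

lemma DInjective.exists_extension {I : C} (hI : DInjective D I) {X Y : C} {i : X ⟶ Y}
    (hi : D.Inflation i) (f : X ⟶ I) : ∃ g : Y ⟶ I, i ≫ g = f := by
  obtain ⟨Q, q₁, q₂, comm, -, Z', d', hconf⟩ := D.pushout_inflation i f hi
  obtain ⟨r, hr⟩ := hI q₂ d' hconf
  exact ⟨q₁ ≫ r, by rw [reassoc_of% comm, hr, Category.comp_id]⟩

lemma DInjective.divisible (hE : ProjGenBy D E M) {I : C} (hI : DInjective D I) :
    Divisible D E I := by
  rintro Y i ⟨Z, d, hc⟩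
  obtain ⟨r, hr⟩ := hI i d hc
  obtain ⟨s, hs⟩ := hc.exists_section_of_retraction hr
  refine ⟨Z, d, (hE i d).mpr ⟨hc, fun _ _ g => ⟨g ≫ s, ?_⟩⟩⟩
  rw [Category.assoc, hs, Category.comp_id]

lemma Divisible.exists_extension (hE : ProjGenBy D E M) {Y : C} (hY : Divisible D E Y)
    {K P V : C} {k : K ⟶ P} {π : P ⟶ V} (hk : D.conf k π) (hV : V ∈ M) (u : K ⟶ Y) :
    ∃ u' : P ⟶ Y, k ≫ u' = u := by
  obtain ⟨Q, q₁, q₂, comm, ⟨hQ⟩, hq₂⟩ := D.pushout_inflation k u ⟨V, π, hk⟩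
  obtain ⟨Z, d, hEd⟩ := hY q₂ hq₂
  obtain ⟨hDd, hlift⟩ := (hE q₂ d).mp hEd
  obtain ⟨π', hπ₁, hπ₂⟩ : ∃ π' : Q ⟶ V, q₁ ≫ π' = π ∧ q₂ ≫ π' = 0 :=
    ⟨_, (PushoutCocone.IsColimit.desc' hQ π 0 (by simp [hk.comp_eq_zero])).2⟩
  obtain ⟨ψ, hψ⟩ := hk.exists_desc (q₁ ≫ d)
    (by rw [reassoc_of% comm, hDd.comp_eq_zero, comp_zero])
  have hπψ : π' ≫ ψ = d := by
    refine PushoutCocone.IsColimit.hom_ext hQ ?_ ?_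
    · change q₁ ≫ π' ≫ ψ = q₁ ≫ d
      rw [reassoc_of% hπ₁, hψ]
    · change q₂ ≫ π' ≫ ψ = q₂ ≫ d
      rw [reassoc_of% hπ₂, zero_comp, hDd.comp_eq_zero]
  obtain ⟨s, hs⟩ := hlift V hV ψ
  obtain ⟨r, hr⟩ := hDd.exists_retraction_of_endo (e := π' ≫ s)
    (by simp [reassoc_of% hπ₂]) (by rw [Category.assoc, hs, hπψ])
  exact ⟨q₁ ≫ r, by rw [reassoc_of% comm, hr, Category.comp_id]⟩

lemma extZero_of_forall_exists_lift {A I W Z : C} {ι : A ⟶ I} {ρ : I ⟶ W} (hρ : D.conf ι ρ)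
    (hI : DInjective D I) (hlift : ∀ f : Z ⟶ W, ∃ g : Z ⟶ I, g ≫ ρ = f) :
    ExtZero D Z A := by
  intro B a b hab
  obtain ⟨e, he⟩ := hI.exists_extension ⟨Z, b, hab⟩ ι
  obtain ⟨f, hf⟩ := hab.exists_desc (e ≫ ρ) (by rw [reassoc_of% he, hρ.comp_eq_zero])
  obtain ⟨g, hg⟩ := hlift f
  obtain ⟨r, hr⟩ := hρ.exists_lift (e - b ≫ g) (by simp [hg, hf])
  exact ⟨r, hρ.cancel_mono (by simp [hr, he, reassoc_of% hab.comp_eq_zero])⟩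

lemma exists_lift_of_forall_exists_extension {K P V Z W Q : C} {k : K ⟶ P} {π : P ⟶ V}
    (hπ : D.conf k π) (hP : DProjective D P) {j : Z ⟶ W} {d : W ⟶ Q} (hjd : D.conf j d)
    (hext : ∀ t : K ⟶ Z, ∃ t' : P ⟶ Z, k ≫ t' = t) (g : V ⟶ Q) :
    ∃ l : V ⟶ W, l ≫ d = g := by
  obtain ⟨h, hh⟩ := hP.exists_lift ⟨Z, j, hjd⟩ (π ≫ g)
  obtain ⟨t, ht⟩ := hjd.exists_lift (k ≫ h)
    (by rw [Category.assoc, hh, reassoc_of% hπ.comp_eq_zero, zero_comp])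
  obtain ⟨t', ht'⟩ := hext t
  obtain ⟨l, hl⟩ := hπ.exists_desc (h - t' ≫ j) (by simp [reassoc_of% ht', ht])
  exact ⟨l, hπ.cancel_epi (by simp [reassoc_of% hl, hh, hjd.comp_eq_zero])⟩

lemma dProjective_of_forall_extZero {Z : C} (hZ : ∀ A : C, ExtZero D Z A) : DProjective D Z :=
  fun i d h => let ⟨_, hr⟩ := hZ _ i d h; h.exists_section_of_retraction hr

lemma dProjective_of_divisible_closed (hE : ProjGenBy D E M) (hi : EnoughInjectives D)
    (hclosed : ∀ {X Y Z : C} (i : X ⟶ Y) (d : Y ⟶ Z), D.conf i d →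
      Divisible D E Y → Divisible D E Z)
    {Z U V : C} {j : Z ⟶ U} {p : U ⟶ V} (hjp : D.conf j p) (hV : V ∈ M)
    (hU : DProjective D U) : DProjective D Z := by
  refine dProjective_of_forall_extZero fun A => ?_
  obtain ⟨I, W, ι, ρ, hρ, hI⟩ := hi A
  have hW : Divisible D E W := hclosed ι ρ hρ (hI.divisible hE)
  intro B a b hab
  refine extZero_of_forall_exists_lift hρ hI (fun f => ?_) a b hab
  obtain ⟨f', hf'⟩ := hW.exists_extension hE hjp hV f
  obtain ⟨g, hg⟩ := hU.exists_lift ⟨A, ι, hρ⟩ f'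
  exact ⟨j ≫ g, by rw [Category.assoc, hg, hf']⟩

lemma divisible_of_conf_of_divisible (hE : ProjGenBy D E M) (hp : EnoughProjectives D)
    (hproj : ∀ {Z U V : C} (j : Z ⟶ U) (p : U ⟶ V), D.conf j p →
      V ∈ M → DProjective D U → DProjective D Z)
    {X Y Z : C} {i : X ⟶ Y} {d : Y ⟶ Z} (hid : D.conf i d) (hY : Divisible D E Y) :
    Divisible D E Z := by
  rintro W j ⟨Q, d', hjd'⟩
  refine ⟨Q, d', (hE j d').mpr ⟨hjd', fun V hV g => ?_⟩⟩
  obtain ⟨K, P, k, π, hπ, hP⟩ := hp V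
  have hK : DProjective D K := hproj k π hπ hV hP
  refine exists_lift_of_forall_exists_extension hπ hP hjd' (fun t => ?_) g
  obtain ⟨u, hu⟩ := hK.exists_lift ⟨X, i, hid⟩ t
  obtain ⟨u', hu'⟩ := hY.exists_extension hE hπ hV u
  exact ⟨u' ≫ d, by rw [reassoc_of% hu', hu]⟩

/-- With enough `D`-injectives and `D`-projectives and `E` `D`-projectively
generated by `M`, the class of `D`-`E`-divisible objects is closed under
`D`-deflations iff for every `D`-conflation `Z ↣ U ↠ V` with `V ∈ M` and `U`
`D`-projective, `Z` is `D`-projective. -/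
theorem divisible_closed_deflations_iff
    (D E : ExactStructure C) (M : Set C) (hE : ProjGenBy D E M)
    (hi : EnoughInjectives D) (hp : EnoughProjectives D) :
    (∀ {X Y Z : C} (i : X ⟶ Y) (d : Y ⟶ Z), D.conf i d →
      Divisible D E Y → Divisible D E Z) ↔
    (∀ {Z U V : C} (j : Z ⟶ U) (p : U ⟶ V), D.conf j p →
      V ∈ M → DProjective D U → DProjective D Z) :=
  ⟨fun hclosed _ _ _ _ _ hjp hV hU => dProjective_of_divisible_closed hE hi hclosed hjp hV hU,
    fun hproj _ _ _ _ _ hid hY => divisible_of_conf_of_divisible hE hp hproj hid hY⟩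
end
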